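/- arXiv:1706.06945 — 5 statements merged into one kernel-verified Lean document; each statement's English description precedes it below -/
import Mathlib

section
/- For every real c in (0,1] and every sufficiently large integer n, if 1/c is not an integer then the floor of n/(⌈cn⌉+1) equals the floor of 1/c. -/
/-- For every real `c ∈ (0,1]` with `1/c` not a natural number, for all sufficiently
large `n`, `⌊n / (⌈cn⌉ + 1)⌋ = ⌊1/c⌋`. -/
theorem stmt_0 (c : ℝ) (hc0 : 0 < c) (hc1 : c ≤ 1) (hnotint : ¬ ∃ m : ℕ, 1 / c = (m : ℝ)) :
    ∃ n₀ : ℕ, ∀ n : ℕ, n₀ ≤ n →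
      ⌊(n : ℝ) / ((⌈c * (n : ℝ)⌉ : ℝ) + 1)⌋ = ⌊1 / c⌋ := by
  have hinv : (1:ℝ) ≤ 1 / c := by rw [le_div_iff₀ hc0]; linarith
  set k : ℤ := ⌊1 / c⌋ with hkdef
  have hk1 : 1 ≤ k := Int.le_floor.2 (by exact_mod_cast hinv)
  have hk1R : (1:ℝ) ≤ (k:ℝ) := by exact_mod_cast hk1
  have hkle : (k:ℝ) ≤ 1 / c := Int.floor_le _
  have hklt : (k:ℝ) < 1 / c := by
    rcases lt_or_eq_of_le hkle with h | h
    · exact h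
    · exfalso
      apply hnotint
      refine ⟨k.toNat, ?_⟩
      rw [← h]
      have : ((k.toNat : ℤ) : ℝ) = (k : ℝ) := by
        rw [Int.toNat_of_nonneg (by linarith : (0:ℤ) ≤ k)]
      exact_mod_cast this.symm
  have hkc : (k:ℝ) * c < 1 := (lt_div_iff₀ hc0).mp hklt
  have hck1 : 1 < ((k:ℝ) + 1) * c := by
    have := Int.lt_floor_add_one (1 / c)
    exact (div_lt_iff₀ hc0).mp this
  refine ⟨⌈(2 * (k:ℝ)) / (1 - (k:ℝ) * c)⌉₊ + 1, fun n hn => ?_⟩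
  have hn1 : 1 ≤ n := le_trans (Nat.le_add_left 1 _) hn
  have hnR : (0:ℝ) ≤ (n:ℝ) := by positivity
  have hnge : (2 * (k:ℝ)) / (1 - (k:ℝ) * c) ≤ (n:ℝ) := by
    have h1 : ⌈(2 * (k:ℝ)) / (1 - (k:ℝ) * c)⌉₊ ≤ n := le_trans (Nat.le_succ _) hn
    exact le_trans (Nat.le_ceil _) (by exact_mod_cast h1)
  have hpos : (0:ℝ) < 1 - (k:ℝ) * c := by linarith
  have hmain : 2 * (k:ℝ) ≤ (n:ℝ) * (1 - (k:ℝ) * c) := by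
    rw [div_le_iff₀ hpos] at hnge; linarith
  have hceil_ge : c * (n:ℝ) ≤ (⌈c * (n:ℝ)⌉ : ℝ) := Int.le_ceil _
  have hceil_lt : (⌈c * (n:ℝ)⌉ : ℝ) < c * (n:ℝ) + 1 := Int.ceil_lt_add_one _
  have hDpos : (0:ℝ) < (⌈c * (n:ℝ)⌉ : ℝ) + 1 := by nlinarith
  rw [Int.floor_eq_iff]
  constructor
  · rw [le_div_iff₀ hDpos]
    nlinarith
  · rw [div_lt_iff₀ hDpos]
    push_cast
    nlinarith
end

section
/- In any graph G, if P is a collection of vertex-disjoint paths covering all vertices of G such that no two paths in P can be merged (i.e., P has minimum size among path covers), then choosing one endpoint from each path yields an independent set; consequently the path cover number of G is at most the independence number of G. -/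
/-!
If the first vertices `u`, `w` of two distinct paths of a path cover were adjacent, reversing the
first path and appending the second one through the edge `uw` would give a path cover with one
path fewer. Hence in a minimum path cover the first vertices are pairwise non-adjacent, and since
the paths are disjoint they are pairwise distinct, so they form an independent set of size
`pathCoverNumber G`.
-/

open Finset

variable {V : Type*}

/-- A nonempty list of vertices forms a path in `G`: consecutive vertices are adjacent
and no vertex repeats. Lists of length 1 are paths of length 0 (single vertices). -/
def IsPathList (G : SimpleGraph V) (l : List V) : Prop :=
  l ≠ [] ∧ l.Chain' G.Adj ∧ l.Nodup

/-- A path cover of `G`: a finite collection of vertex-disjoint paths covering all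
vertices. -/
def IsPathCover [DecidableEq V] [Fintype V] (G : SimpleGraph V) (P : Finset (List V)) : Prop :=
  (∀ l ∈ P, IsPathList G l) ∧
  (∀ l ∈ P, ∀ l' ∈ P, l ≠ l' → ∀ v, v ∈ l → v ∉ l') ∧
  (∀ v : V, ∃ l ∈ P, v ∈ l)

/-- The path cover number: the minimum size of a path cover. -/
noncomputable def pathCoverNumber [DecidableEq V] [Fintype V] (G : SimpleGraph V) : ℕ :=
  sInf {k : ℕ | ∃ P : Finset (List V), IsPathCover G P ∧ P.card = k}

/-- The independence number of `G`. -/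
noncomputable def indepNumber [DecidableEq V] [Fintype V] (G : SimpleGraph V) : ℕ :=
  sSup {k : ℕ | ∃ s : Finset V, (∀ u ∈ s, ∀ v ∈ s, ¬ G.Adj u v) ∧ s.card = k}

namespace IsPathList

variable {G : SimpleGraph V} {l l' : List V}

theorem reverse (hl : IsPathList G l) : IsPathList G l.reverse := by
  refine ⟨List.reverse_ne_nil_iff.2 hl.1, ?_, List.nodup_reverse.2 hl.2.2⟩
  have hsymm : (fun a b => G.Adj b a) = G.Adj := by
    ext a b
    exact G.adj_comm b a
  exact List.isChain_reverse.2 (hsymm ▸ hl.2.1)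

theorem append (hl : IsPathList G l) (hl' : IsPathList G l') (hdisj : ∀ v ∈ l, v ∉ l')
    (hadj : ∀ x ∈ l.getLast?, ∀ y ∈ l'.head?, G.Adj x y) : IsPathList G (l ++ l') :=
  ⟨by simp [hl.1], List.isChain_append.2 ⟨hl.2.1, hl'.2.1, hadj⟩,
    List.nodup_append.2 ⟨hl.2.2, hl'.2.2, fun a ha b hb hab => hdisj a ha (hab ▸ hb)⟩⟩

end IsPathList

def heads [DecidableEq V] (P : Finset (List V)) : Finset V :=
  P.biUnion fun l => l.head?.toFinset

theorem mem_heads [DecidableEq V] {P : Finset (List V)} {v : V} :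
    v ∈ heads P ↔ ∃ l ∈ P, l.head? = some v := by
  simp [heads]

namespace IsPathCover

variable [DecidableEq V] [Fintype V] {G : SimpleGraph V} {P : Finset (List V)}

theorem exists_card_add_one_eq_of_merge (hP : IsPathCover G P) {l l' m : List V} (hl : l ∈ P)
    (hl' : l' ∈ P) (hne : l ≠ l') (hm : IsPathList G m) (hmem : ∀ v, v ∈ m ↔ v ∈ l ∨ v ∈ l') :
    ∃ P' : Finset (List V), IsPathCover G P' ∧ P'.card + 1 = P.card := by
  obtain ⟨hpath, hdisj, hcov⟩ := hP
  set s := (P.erase l).erase l'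
  have hsP : ∀ a ∈ s, a ∈ P ∧ a ≠ l ∧ a ≠ l' := fun a ha => by
    simp only [s, mem_erase] at ha
    exact ⟨ha.2.2, ha.2.1, ha.1⟩
  have hs_disj : ∀ a ∈ s, ∀ v ∈ a, v ∉ m := by
    intro a ha v hva hvm
    obtain ⟨haP, hal, hal'⟩ := hsP a ha
    rcases (hmem v).1 hvm with hv | hv
    · exact hdisj a haP l hl hal v hva hv
    · exact hdisj a haP l' hl' hal' v hva hv
  have hm_notMem : m ∉ s := by
    intro hms
    obtain ⟨v, hv⟩ := List.exists_mem_of_ne_nil l (hpath l hl).1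
    exact hs_disj m hms v ((hmem v).2 (Or.inl hv)) ((hmem v).2 (Or.inl hv))
  refine ⟨insert m s, ⟨?_, ?_, ?_⟩, ?_⟩
  · intro a ha
    rcases mem_insert.1 ha with rfl | ha
    exacts [hm, hpath a (hsP a ha).1]
  · intro a ha b hb hab v hva hvb
    rcases mem_insert.1 ha with ha | ha <;> rcases mem_insert.1 hb with hb | hb
    · exact hab (ha.trans hb.symm)
    · exact hs_disj b hb v hvb (ha ▸ hva)
    · exact hs_disj a ha v hva (hb ▸ hvb)
    · exact hdisj a (hsP a ha).1 b (hsP b hb).1 hab v hva hvb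
  · intro v
    obtain ⟨a, ha, hv⟩ := hcov v
    by_cases hal : a = l
    · exact ⟨m, mem_insert_self _ _, (hmem v).2 (Or.inl (hal ▸ hv))⟩
    by_cases hal' : a = l'
    · exact ⟨m, mem_insert_self _ _, (hmem v).2 (Or.inr (hal' ▸ hv))⟩
    exact ⟨a, mem_insert_of_mem (by simp [s, hal, hal', ha]), hv⟩
  · rw [card_insert_of_notMem hm_notMem, card_erase_add_one (mem_erase.2 ⟨hne.symm, hl'⟩),
      card_erase_add_one hl]

theorem pathCoverNumber_le_card (hP : IsPathCover G P) : pathCoverNumber G ≤ P.card :=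
  Nat.sInf_le ⟨P, hP, rfl⟩

theorem not_adj_heads_of_card_eq (hP : IsPathCover G P) (hmin : P.card = pathCoverNumber G)
    {l l' : List V} (hl : l ∈ P) (hl' : l' ∈ P) {u w : V} (hu : l.head? = some u)
    (hw : l'.head? = some w) : ¬ G.Adj u w := by
  intro hadj
  by_cases hne : l = l'
  · subst hne
    obtain rfl : u = w := Option.some_injective _ (hu.symm.trans hw)
    exact G.irrefl hadj
  have hmerge : IsPathList G (l.reverse ++ l') :=
    (hP.1 l hl).reverse.append (hP.1 l' hl')
      (fun v hv => hP.2.1 l hl l' hl' hne v (List.mem_reverse.1 hv))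
      (by simpa [List.getLast?_reverse, hu, hw] using hadj)
  obtain ⟨P', hP', hcard⟩ :=
    hP.exists_card_add_one_eq_of_merge hl hl' hne hmerge (by simp)
  have := hP'.pathCoverNumber_le_card
  omega

theorem card_heads (hP : IsPathCover G P) : (heads P).card = P.card := by
  have hhead : ∀ l ∈ P, ∃ v, l.head? = some v ∧ v ∈ l := fun l hl => by
    obtain ⟨v, t, rfl⟩ := List.exists_cons_of_ne_nil (hP.1 l hl).1
    exact ⟨v, rfl, List.mem_cons_self⟩
  rw [heads, card_biUnion, card_eq_sum_ones]
  · refine sum_congr rfl fun l hl => ?_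
    obtain ⟨v, hv, -⟩ := hhead l hl
    simp [hv]
  · intro l hl l' hl' hne
    obtain ⟨v, hv, hvl⟩ := hhead l hl
    obtain ⟨v', hv', hvl'⟩ := hhead l' hl'
    rw [Function.onFun, hv, hv', Option.toFinset_some, Option.toFinset_some, disjoint_singleton]
    rintro rfl
    exact hP.2.1 l hl l' hl' hne v hvl hvl'

end IsPathCover

theorem card_le_indepNumber [DecidableEq V] [Fintype V] {G : SimpleGraph V} {s : Finset V}
    (hs : ∀ u ∈ s, ∀ v ∈ s, ¬ G.Adj u v) : s.card ≤ indepNumber G :=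
  le_csSup ⟨Fintype.card V, by rintro k ⟨t, -, rfl⟩; exact card_le_univ t⟩ ⟨s, hs, rfl⟩

/-- If `P` is a minimum path cover of `G`, then the set of starting vertices of the
paths of `P` is an independent set; consequently the path cover number of `G` is at
most the independence number of `G`. -/
theorem stmt_2 [DecidableEq V] [Fintype V] (G : SimpleGraph V) (P : Finset (List V))
    (hP : IsPathCover G P) (hmin : P.card = pathCoverNumber G) :
    (∀ u ∈ {v : V | ∃ l ∈ P, l.head? = some v}, ∀ w ∈ {v : V | ∃ l ∈ P, l.head? = some v},
      ¬ G.Adj u w) ∧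
    pathCoverNumber G ≤ indepNumber G := by
  have hindep : ∀ u ∈ {v : V | ∃ l ∈ P, l.head? = some v},
      ∀ w ∈ {v : V | ∃ l ∈ P, l.head? = some v}, ¬ G.Adj u w := by
    rintro u ⟨l, hl, hu⟩ w ⟨l', hl', hw⟩
    exact hP.not_adj_heads_of_card_eq hmin hl hl' hu hw
  refine ⟨hindep, ?_⟩
  calc pathCoverNumber G = (heads P).card := by rw [hP.card_heads, hmin]
    _ ≤ indepNumber G :=
      card_le_indepNumber fun u hu w hw => hindep u (mem_heads.1 hu) w (mem_heads.1 hw)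
end

section
/- For any finite simple graph G, the fractional matching number of G equals (|V(G)| - max over S ⊆ V(G) of (i(G - S) - |S|))/2, where i(G - S) denotes the number of isolated vertices of the graph G - S. -/
/-!
Weak duality: give weight `2` to the vertices of `S` and weight `1` to the vertices of `G - S`
that are not isolated there. Every edge then carries weight at least `2`, so double counting the
vertex loads of a fractional matching `f` gives `2 ∑ f ≤ 2|S| + (|V| - |S| - i(G - S))`.

Strong duality: let `S₀` maximise `i(G - S) - |S|` and put `D = i(G - S₀) - |S₀|`. Every `A`
has `|A| - |N(A)| ≤ D`, so Hall's theorem with `D` extra universal vertices matches all but `D`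
vertices `x` injectively to neighbours `m x`. Weight `1/2` on each edge `x (m x)` is a fractional
matching of value at least `(|V| - D) / 2`.
-/

open Finset

variable {V : Type*}

/-- A fractional matching of `G`: a `[0,1]`-valued weight on edges (zero outside the
edge set) such that the total weight at each vertex is at most `1`. -/
def IsFracMatching [Fintype V] [DecidableEq V] (G : SimpleGraph V) [DecidableRel G.Adj]
    (f : Sym2 V → ℝ) : Prop :=
  (∀ e, 0 ≤ f e ∧ f e ≤ 1) ∧ (∀ e, e ∉ G.edgeSet → f e = 0) ∧
  ∀ v : V, ∑ e ∈ G.edgeFinset, (if v ∈ e then f e else 0) ≤ 1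

/-- The fractional matching number of `G`. -/
noncomputable def fracMatchingNumber [Fintype V] [DecidableEq V] (G : SimpleGraph V)
    [DecidableRel G.Adj] : ℝ :=
  sSup {x : ℝ | ∃ f, IsFracMatching G f ∧ ∑ e ∈ G.edgeFinset, f e = x}

/-- `isoCount G S` is the number of isolated vertices of the induced subgraph `G - S`. -/
def isoCount [Fintype V] [DecidableEq V] (G : SimpleGraph V) [DecidableRel G.Adj]
    (S : Finset V) : ℕ :=
  (Finset.univ.filter (fun v => v ∉ S ∧ ∀ u ∉ S, ¬ G.Adj v u)).card

section FractionalBergeTutte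

variable [Fintype V] [DecidableEq V] {G : SimpleGraph V} [DecidableRel G.Adj]

variable (G) in
def isoSet (S : Finset V) : Finset V :=
  {v | v ∉ S ∧ ∀ u ∉ S, ¬ G.Adj v u}

lemma card_isoSet (S : Finset V) : #(isoSet G S) = isoCount G S := rfl

lemma disjoint_isoSet (S : Finset V) : Disjoint S (isoSet G S) :=
  disjoint_left.2 fun _ hv hiso => (mem_filter.1 hiso).2.1 hv

variable (G) in
def vertexLoad (f : Sym2 V → ℝ) (v : V) : ℝ :=
  ∑ e ∈ G.edgeFinset, if v ∈ e then f e else 0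

lemma IsFracMatching.vertexLoad_le_one {f : Sym2 V → ℝ} (hf : IsFracMatching G f) (v : V) :
    vertexLoad G f v ≤ 1 :=
  hf.2.2 v

lemma IsFracMatching.of_vertexLoad_le_one {f : Sym2 V → ℝ} (hf0 : ∀ e, 0 ≤ f e)
    (hsupp : ∀ e ∉ G.edgeSet, f e = 0) (hload : ∀ v, vertexLoad G f v ≤ 1) :
    IsFracMatching G f := by
  refine ⟨fun e => ⟨hf0 e, ?_⟩, hsupp, hload⟩
  by_cases he : e ∈ G.edgeSet
  · induction e using Sym2.ind with
    | _ a b =>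
    calc f s(a, b) = if a ∈ s(a, b) then f s(a, b) else 0 := by simp
      _ ≤ vertexLoad G f a :=
        single_le_sum (f := fun e => if a ∈ e then f e else 0)
          (fun e _ => by split_ifs <;> simp [hf0]) (G.mem_edgeFinset.2 he)
      _ ≤ 1 := hload a
  · simp [hsupp e he]

lemma sum_vertexLoad (f : Sym2 V → ℝ) (X : Finset V) :
    ∑ v ∈ X, vertexLoad G f v = ∑ e ∈ G.edgeFinset, f e * #{v ∈ X | v ∈ e} := by
  unfold vertexLoad
  rw [sum_comm]
  refine sum_congr rfl fun e _ => ?_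
  rw [← sum_filter, sum_const, nsmul_eq_mul, mul_comm]

/-- An edge either meets `S` or has both ends in `G - S`, where they are not isolated. -/
lemma two_le_card_inter_edge (S : Finset V) {e : Sym2 V} (he : e ∈ G.edgeSet) :
    2 ≤ 2 * #{v ∈ S | v ∈ e} + #{v ∈ (S ∪ isoSet G S)ᶜ | v ∈ e} := by
  induction e using Sym2.ind with
  | _ a b =>
  by_cases hS : a ∈ S ∨ b ∈ S
  · obtain ⟨c, hcS, hc⟩ : ∃ c ∈ S, c ∈ s(a, b) := by
      rcases hS with h | h
      exacts [⟨a, h, Sym2.mem_mk_left a b⟩, ⟨b, h, Sym2.mem_mk_right a b⟩]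
    have : 0 < #{v ∈ S | v ∈ s(a, b)} := card_pos.2 ⟨c, mem_filter.2 ⟨hcS, hc⟩⟩
    omega
  · have hab : G.Adj a b := he
    have hpair : {a, b} ⊆ {v ∈ (S ∪ isoSet G S)ᶜ | v ∈ s(a, b)} := by
      simp only [isoSet, not_or] at hS ⊢
      intro v hv
      simp only [mem_insert, mem_singleton] at hv
      rcases hv with rfl | rfl
      · simpa [hS.1] using ⟨b, hS.2, hab⟩
      · simpa [hS.2] using ⟨a, hS.1, hab.symm⟩
    have := card_le_card hpair
    rw [card_pair hab.ne] at this
    omega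

lemma IsFracMatching.two_mul_sum_add_isoCount_le {f : Sym2 V → ℝ} (hf : IsFracMatching G f)
    (S : Finset V) :
    2 * ∑ e ∈ G.edgeFinset, f e + isoCount G S ≤ Fintype.card V + #S := by
  set B := (S ∪ isoSet G S)ᶜ
  have hcover : 2 * ∑ e ∈ G.edgeFinset, f e ≤
      2 * ∑ v ∈ S, vertexLoad G f v + ∑ v ∈ B, vertexLoad G f v := by
    rw [sum_vertexLoad, sum_vertexLoad, mul_sum, mul_sum, ← sum_add_distrib]
    refine sum_le_sum fun e he => ?_
    have h2 : (2 : ℝ) ≤ 2 * #{v ∈ S | v ∈ e} + #{v ∈ B | v ∈ e} := by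
      exact_mod_cast two_le_card_inter_edge S (G.mem_edgeFinset.1 he)
    nlinarith [(hf.1 e).1]
  have hS : ∑ v ∈ S, vertexLoad G f v ≤ #S := by
    simpa using sum_le_sum fun v (_ : v ∈ S) => hf.vertexLoad_le_one v
  have hB : ∑ v ∈ B, vertexLoad G f v ≤ #B := by
    simpa using sum_le_sum fun v (_ : v ∈ B) => hf.vertexLoad_le_one v
  have hcard : #B + isoCount G S + #S = Fintype.card V := by
    rw [card_compl, card_union_of_disjoint (disjoint_isoSet S), card_isoSet]
    have := card_le_univ (S ∪ isoSet G S)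
    rw [card_union_of_disjoint (disjoint_isoSet S), card_isoSet] at this
    omega
  have : (#B : ℝ) + isoCount G S + #S = Fintype.card V := by exact_mod_cast hcard
  linarith

/-- A vertex `v` lies only on the edge `v (m v)` and on the edge from its `m`-preimage. -/
lemma exists_isFracMatching_of_injOn {T : Finset V} {m : V → V} (hm : Set.InjOn m T)
    (hadj : ∀ x ∈ T, G.Adj x (m x)) :
    ∃ f, IsFracMatching G f ∧ ∑ e ∈ G.edgeFinset, f e = #T / 2 := by
  have hfiber (U : Finset V) (hU : U ⊆ T) :
      ∑ e ∈ G.edgeFinset, (#{x ∈ U | s(x, m x) = e} : ℝ) = #U := by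
    have := card_eq_sum_card_fiberwise (f := fun x => s(x, m x)) fun x hx =>
      G.mem_edgeFinset.2 (hadj x (hU hx))
    exact_mod_cast this.symm
  have hload (v : V) : vertexLoad G (fun e => #{x ∈ T | s(x, m x) = e} / 2) v =
      #{x ∈ T | v ∈ s(x, m x)} / 2 := by
    rw [vertexLoad, ← hfiber _ (filter_subset _ T), sum_div]
    refine sum_congr rfl fun e _ => ?_
    rw [filter_filter]
    split_ifs with hv
    · congr 3
      exact filter_congr fun x _ => ⟨fun h => ⟨h ▸ hv, h⟩, And.right⟩
    · rw [filter_false_of_mem fun x _ (h : v ∈ s(x, m x) ∧ s(x, m x) = e) => hv (h.2 ▸ h.1)]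
      simp
  have hcard (v : V) : #{x ∈ T | v ∈ s(x, m x)} ≤ 2 := by
    have hsub : {x ∈ T | v ∈ s(x, m x)} ⊆ insert v {x ∈ T | m x = v} := by
      intro x hx
      simp only [mem_filter, Sym2.mem_iff, mem_insert] at hx ⊢
      grind
    have hone : #{x ∈ T | m x = v} ≤ 1 := card_le_one.2 fun a ha b hb => by
      rw [mem_filter] at ha hb
      exact hm ha.1 hb.1 (ha.2.trans hb.2.symm)
    calc _ ≤ _ := card_le_card hsub
      _ ≤ _ := card_insert_le _ _
      _ ≤ 2 := by omega
  refine ⟨fun e => #{x ∈ T | s(x, m x) = e} / 2,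
    .of_vertexLoad_le_one (fun _ => by positivity) (fun e he => ?_) (fun v => ?_), ?_⟩
  · rw [filter_false_of_mem fun x hx (hxe : s(x, m x) = e) => he (hxe ▸ hadj x hx)]
    simp
  · have : (#{x ∈ T | v ∈ s(x, m x)} : ℝ) ≤ 2 := by exact_mod_cast hcard v
    rw [hload]
    linarith
  · rw [← sum_div, hfiber T subset_rfl]

/-- Hall's theorem after adding `D` new vertices adjacent to all of `V`. -/
lemma exists_injOn_adj_of_forall_card_le (D : ℕ)
    (hD : ∀ A : Finset V, #A ≤ #(A.biUnion fun v => G.neighborFinset v) + D) :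
    ∃ T : Finset V, ∃ m : V → V, Set.InjOn m T ∧ (∀ x ∈ T, G.Adj x (m x)) ∧
      Fintype.card V ≤ #T + D := by
  let t : V → Finset (V ⊕ Fin D) := fun v => (G.neighborFinset v).disjSum univ
  have hall : ∀ A : Finset V, #A ≤ #(A.biUnion t) := by
    intro A
    rcases A.eq_empty_or_nonempty with rfl | ⟨a, ha⟩
    · simp
    calc #A ≤ #((A.biUnion fun v => G.neighborFinset v).disjSum (univ : Finset (Fin D))) := by
          rw [card_disjSum, card_univ, Fintype.card_fin]
          exact hD A
      _ ≤ #(A.biUnion t) := card_le_card fun x hx => by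
          rcases x with w | d
          · obtain ⟨v, hv, hw⟩ := mem_biUnion.1 (inl_mem_disjSum.1 hx)
            exact mem_biUnion.2 ⟨v, hv, inl_mem_disjSum.2 hw⟩
          · exact mem_biUnion.2 ⟨a, ha, inr_mem_disjSum.2 (mem_univ d)⟩
  obtain ⟨F, hFinj, hFt⟩ := (all_card_le_biUnion_card_iff_exists_injective t).1 hall
  set T : Finset V := {v | (F v).isLeft}
  set m : V → V := fun v => (F v).elim id fun _ => v
  have hFm : ∀ x ∈ T, F x = .inl (m x) := fun x hx => by
    rcases hFx : F x with w | d <;> simp_all [T, m]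
  refine ⟨T, m, fun x hx y hy hxy => hFinj ?_, fun x hx => ?_, ?_⟩
  · rw [hFm x hx, hFm y hy, hxy]
  · simpa [t, hFm x hx] using hFt x
  · have hright : #{v | ¬ (F v).isLeft} ≤ D := by
      calc _ ≤ #((∅ : Finset V).disjSum (univ : Finset (Fin D))) :=
            card_le_card_of_injOn F (fun v hv => by
              rcases hFv : F v with w | d <;> simp_all) hFinj.injOn
        _ = D := by simp
    have := card_filter_add_card_filter_not (s := univ) fun v => (F v).isLeft
    rw [card_univ] at this
    simp only [T]
    omega

/-- Take `S = N(A \ N(A))`: then `A \ N(A)` is isolated in `G - S`, and `S ⊆ N(A) \ A`. -/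
lemma exists_card_add_card_le_card_biUnion_add_isoCount (A : Finset V) :
    ∃ S : Finset V, #A + #S ≤ #(A.biUnion fun v => G.neighborFinset v) + isoCount G S := by
  set N := A.biUnion fun v => G.neighborFinset v
  set S := (A \ N).biUnion fun v => G.neighborFinset v
  have hSN : S ⊆ N \ A := by
    intro w hw
    obtain ⟨u, hu, huw⟩ := mem_biUnion.1 hw
    rw [mem_sdiff] at hu
    rw [SimpleGraph.mem_neighborFinset] at huw
    exact mem_sdiff.2 ⟨mem_biUnion.2 ⟨u, hu.1, by simpa using huw⟩,
      fun hwA => hu.2 (mem_biUnion.2 ⟨w, hwA, by simpa using huw.symm⟩)⟩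
  have hiso : A \ N ⊆ isoSet G S := fun v hv =>
    mem_filter.2 ⟨mem_univ v, fun hvS => (mem_sdiff.1 (hSN hvS)).2 (mem_sdiff.1 hv).1,
      fun u hu hvu => hu (mem_biUnion.2 ⟨v, hv, by simpa using hvu⟩)⟩
  have hA := card_sdiff_add_card_inter A N
  have hN := card_sdiff_add_card_inter N A
  have hSN' := card_le_card hSN
  have hiso' := card_le_card hiso
  rw [inter_comm] at hN
  rw [card_isoSet] at hiso'
  exact ⟨S, by omega⟩

lemma exists_isFracMatching_card_add_le (S₀ : Finset V)
    (hS₀ : ∀ S, isoCount G S + #S₀ ≤ isoCount G S₀ + #S) :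
    ∃ f, IsFracMatching G f ∧
      (Fintype.card V + #S₀ : ℝ) ≤ 2 * ∑ e ∈ G.edgeFinset, f e + isoCount G S₀ := by
  have hS₀_le : #S₀ ≤ isoCount G S₀ := le_of_add_le_right (by simpa using hS₀ ∅)
  have hD (A : Finset V) :
      #A ≤ #(A.biUnion fun v => G.neighborFinset v) + (isoCount G S₀ - #S₀) := by
    obtain ⟨S, hS⟩ := exists_card_add_card_le_card_biUnion_add_isoCount (G := G) A
    have := hS₀ S
    omega
  obtain ⟨T, m, hm, hadj, hT⟩ := exists_injOn_adj_of_forall_card_le _ hD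
  obtain ⟨f, hf, hsum⟩ := exists_isFracMatching_of_injOn hm hadj
  have hT' : (Fintype.card V : ℝ) ≤ #T + ((isoCount G S₀ - #S₀ : ℕ) : ℝ) := by
    exact_mod_cast hT
  rw [Nat.cast_sub hS₀_le] at hT'
  exact ⟨f, hf, by rw [hsum]; linarith⟩

end FractionalBergeTutte

/-- Fractional Berge–Tutte formula: `μ_f(G) = (|V| - max_S (i(G-S) - |S|)) / 2`. -/
theorem stmt_6 [Fintype V] [DecidableEq V] (G : SimpleGraph V) [DecidableRel G.Adj] :
    fracMatchingNumber G =
      ((Fintype.card V : ℝ) -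
        (Finset.univ : Finset (Finset V)).sup' ⟨∅, Finset.mem_univ ∅⟩
          (fun S => (isoCount G S : ℝ) - S.card)) / 2 := by
  set δ : Finset V → ℝ := fun S => (isoCount G S : ℝ) - #S
  obtain ⟨S₀, -, hS₀⟩ := exists_max_image univ δ univ_nonempty
  have hsup : univ.sup' ⟨∅, mem_univ ∅⟩ δ = δ S₀ :=
    le_antisymm (sup'_le _ _ fun S _ => hS₀ S (mem_univ S)) (le_sup' δ (mem_univ S₀))
  obtain ⟨f, hf, hf_ge⟩ := exists_isFracMatching_card_add_le (G := G) S₀ fun S => by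
    have : (isoCount G S + #S₀ : ℝ) ≤ isoCount G S₀ + #S := by
      linarith [hS₀ S (mem_univ S)]
    exact_mod_cast this
  have hgreatest : IsGreatest {x | ∃ f, IsFracMatching G f ∧ ∑ e ∈ G.edgeFinset, f e = x}
      ((Fintype.card V - δ S₀) / 2) := by
    refine ⟨⟨f, hf, ?_⟩, ?_⟩
    · linarith [hf.two_mul_sum_add_isoCount_le S₀]
    · rintro _ ⟨g, hg, rfl⟩
      linarith [hg.two_mul_sum_add_isoCount_le S₀]
  rw [fracMatchingNumber, hgreatest.csSup_eq, hsup]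
end

section
/- Every finite simple graph G admits a maximum fractional matching all of whose values lie in {0, 1/2, 1}; that is, there is a fractional matching f with Σ_e f(e) = μ_f(G) and f(e) ∈ {0, 1/2, 1} for every edge e. -/
open Finset

variable {V : Type*}

private lemma card_mem_sym2 [Fintype V] [DecidableEq V] (e : Sym2 V) (he : ¬ e.IsDiag) :
    (Finset.univ.filter (fun v : V => v ∈ e)).card = 2 := by
  induction e with
  | _ a b =>
    have hab : a ≠ b := by simpa [Sym2.isDiag_iff_proj_eq] using he
    have h1 : Finset.univ.filter (fun v : V => v ∈ s(a, b)) = {a, b} := by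
      ext v; simp [Sym2.mem_iff]
    rw [h1, card_insert_of_notMem (by simpa using hab), card_singleton]

private lemma double_count [Fintype V] [DecidableEq V] {I : Finset (Sym2 V)}
    (hI : ∀ e ∈ I, ¬ e.IsDiag) :
    ∑ v : V, (I.filter (fun e => v ∈ e)).card = 2 * I.card := by
  have h1 : ∀ v : V, (I.filter (fun e => v ∈ e)).card = ∑ e ∈ I, if v ∈ e then 1 else 0 :=
    fun v => Finset.card_filter _ _
  simp_rw [h1]
  rw [Finset.sum_comm]
  have h2 : ∀ e ∈ I, (∑ v : V, if v ∈ e then (1:ℕ) else 0) = 2 := by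
    intro e he
    rw [← Finset.card_filter]
    exact card_mem_sym2 e (hI e he)
  rw [Finset.sum_congr rfl h2]
  simp [mul_comm]

private noncomputable def incMap [Fintype V] [DecidableEq V] (I : Finset (Sym2 V))
    (T : Finset V) : (↥I → ℝ) →ₗ[ℝ] (↥T → ℝ) where
  toFun x v := ∑ e : ↥I, if (v : V) ∈ (e : Sym2 V) then x e else 0
  map_add' x y := by
    funext v
    simp only [Pi.add_apply]
    rw [← Finset.sum_add_distrib]
    exact Finset.sum_congr rfl fun e _ => by split <;> simp
  map_smul' c x := by
    funext v
    simp only [RingHom.id_apply, Pi.smul_apply, smul_eq_mul]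
    rw [Finset.mul_sum]
    exact Finset.sum_congr rfl fun e _ => by split <;> simp

private lemma kernel_lemma [Fintype V] [DecidableEq V] (G : SimpleGraph V) [DecidableRel G.Adj]
    {f : Sym2 V → ℝ} (hf : IsFracMatching G f) {e₀ : Sym2 V} (he₀ : e₀ ∈ G.edgeFinset)
    (hbad : ¬(f e₀ = 0 ∨ f e₀ = 1/2 ∨ f e₀ = 1)) :
    ∃ X : Sym2 V → ℝ,
      (∃ e ∈ G.edgeFinset, X e ≠ 0) ∧
      (∀ e, X e ≠ 0 → e ∈ G.edgeFinset ∧ 0 < f e ∧ f e < 1) ∧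
      (∀ v : V, (∑ e ∈ G.edgeFinset, if v ∈ e then f e else 0) = 1 →
        (∑ e ∈ G.edgeFinset, if v ∈ e then X e else 0) = 0) := by
  classical
  obtain ⟨hbnd, hsupp, hle⟩ := hf
  push_neg at hbad
  obtain ⟨hb0, hbh, hb1⟩ := hbad
  set I : Finset (Sym2 V) := G.edgeFinset.filter (fun e => 0 < f e ∧ f e < 1) with hIdef
  have hsubI : I ⊆ G.edgeFinset := Finset.filter_subset _ _
  have hIint : ∀ e ∈ I, 0 < f e ∧ f e < 1 := fun e he => (Finset.mem_filter.mp he).2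
  have he₀I : e₀ ∈ I := by
    refine Finset.mem_filter.mpr ⟨he₀, lt_of_le_of_ne (hbnd e₀).1 (Ne.symm hb0),
      lt_of_le_of_ne (hbnd e₀).2 hb1⟩
  set dI : V → ℕ := fun v => (I.filter (fun e => v ∈ e)).card with hdIdef
  -- splitting the vertex sum
  set m : V → ℝ := fun v => ∑ e ∈ (G.edgeFinset.filter (fun e => v ∈ e)).filter
      (fun e => ¬(0 < f e ∧ f e < 1)), f e with hmdef
  have hsplit : ∀ v : V, (∑ e ∈ I.filter (fun e => v ∈ e), f e) + m v
      = ∑ e ∈ G.edgeFinset, if v ∈ e then f e else 0 := by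
    intro v
    have h1 : (∑ e ∈ G.edgeFinset, if v ∈ e then f e else 0)
        = ∑ e ∈ G.edgeFinset.filter (fun e => v ∈ e), f e := (Finset.sum_filter _ _).symm
    have hset : (G.edgeFinset.filter (fun e => v ∈ e)).filter (fun e => 0 < f e ∧ f e < 1)
        = I.filter (fun e => v ∈ e) := by
      rw [hIdef, Finset.filter_filter, Finset.filter_filter]
      exact Finset.filter_congr fun e _ => by tauto
    rw [h1, ← Finset.sum_filter_add_sum_filter_not (G.edgeFinset.filter (fun e => v ∈ e))
      (fun e => 0 < f e ∧ f e < 1) f, hset]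
  have hm01 : ∀ v : V, m v = 0 ∨ 1 ≤ m v := by
    intro v
    by_cases hall : ∀ e ∈ (G.edgeFinset.filter (fun e => v ∈ e)).filter
        (fun e => ¬(0 < f e ∧ f e < 1)), f e = 0
    · exact Or.inl (Finset.sum_eq_zero hall)
    · simp only [not_forall, Classical.not_imp] at hall
      obtain ⟨e, he, hne⟩ := hall
      have h1 : f e = 1 := by
        have hni := (Finset.mem_filter.mp he).2
        rcases eq_or_lt_of_le (hbnd e).1 with h | h
        · exact absurd h.symm hne
        · rcases eq_or_lt_of_le (hbnd e).2 with h2 | h2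
          · exact h2
          · exact absurd (⟨h, h2⟩ : 0 < f e ∧ f e < 1) hni
      refine Or.inr ?_
      calc (1:ℝ) = f e := h1.symm
        _ ≤ m v := Finset.single_le_sum (fun e' _ => (hbnd e').1) he
  have hmnn : ∀ v : V, 0 ≤ m v := fun v => Finset.sum_nonneg fun e _ => (hbnd e).1
  -- tight vertices have interior degree ≠ 1
  have hdeg1 : ∀ v : V, (∑ e ∈ G.edgeFinset, if v ∈ e then f e else 0) = 1 → dI v ≠ 1 := by
    intro v htv h1
    obtain ⟨e, he⟩ := Finset.card_eq_one.mp h1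
    have heI : e ∈ I.filter (fun e => v ∈ e) := by rw [he]; exact Finset.mem_singleton_self e
    have heI' := (Finset.mem_filter.mp heI).1
    have hint := hIint e heI'
    have hs := hsplit v
    rw [htv, he, Finset.sum_singleton] at hs
    rcases hm01 v with h | h
    · rw [h] at hs; linarith [hint.2]
    · linarith [hint.1]
  -- the set of tight vertices of interior degree ≥ 2
  set T : Finset V := Finset.univ.filter
      (fun v => (∑ e ∈ G.edgeFinset, if v ∈ e then f e else 0) = 1 ∧ 2 ≤ dI v) with hTdef
  have hInd : ∀ e ∈ I, ¬ e.IsDiag := fun e he =>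
    SimpleGraph.not_isDiag_of_mem_edgeSet G (SimpleGraph.mem_edgeFinset.mp (hsubI he))
  have hc0 : ∑ v : V, dI v = 2 * I.card := double_count hInd
  have hc1 : ∑ v ∈ T, dI v ≤ 2 * I.card := by
    rw [← hc0]
    exact Finset.sum_le_sum_of_subset (Finset.subset_univ T)
  have hc2 : 2 * T.card ≤ ∑ v ∈ T, dI v := by
    have := Finset.card_nsmul_le_sum T dI 2 (fun v hv => (Finset.mem_filter.mp hv).2.2)
    simpa [smul_eq_mul, mul_comm] using this
  -- the common "degree 0" computation
  have hzero_sum : ∀ (X : Sym2 V → ℝ), (∀ e, X e ≠ 0 → e ∈ I) → ∀ v : V, dI v = 0 →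
      (∑ e ∈ G.edgeFinset, if v ∈ e then X e else 0) = 0 := by
    intro X hX v hd0
    apply Finset.sum_eq_zero
    intro e he
    split
    · by_contra hXne
      have heI : e ∈ I.filter (fun e => v ∈ e) := Finset.mem_filter.mpr ⟨hX e hXne, ‹v ∈ e›⟩
      rw [Finset.card_eq_zero.mp hd0] at heI
      simp at heI
    · rfl
  rcases lt_or_ge T.card I.card with hlt | hge
  · -- dimension case: nontrivial kernel of the incidence map
    have hninj : ¬ Function.Injective ⇑(incMap (V := V) I T) := by
      intro hinj
      have hrk := LinearMap.finrank_le_finrank_of_injective hinj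
      rw [Module.finrank_fintype_fun_eq_card, Module.finrank_fintype_fun_eq_card,
        Fintype.card_coe, Fintype.card_coe] at hrk
      omega
    rw [Function.not_injective_iff] at hninj
    obtain ⟨a, b, hab, hne⟩ := hninj
    set x : ↥I → ℝ := a - b with hxdef
    have hx0 : x ≠ 0 := sub_ne_zero.mpr hne
    have hΦx : incMap (V := V) I T x = 0 := by
      rw [hxdef, map_sub, hab, sub_self]
    set X : Sym2 V → ℝ := fun e => if h : e ∈ I then x ⟨e, h⟩ else 0 with hXdef
    have hXsupp : ∀ e, X e ≠ 0 → e ∈ I := by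
      intro e h
      by_contra hni
      exact h (dif_neg hni)
    refine ⟨X, ?_, ?_, ?_⟩
    · obtain ⟨⟨e, heI⟩, hne'⟩ := Function.ne_iff.mp hx0
      exact ⟨e, hsubI heI, by rw [hXdef]; simpa [dif_pos heI] using hne'⟩
    · intro e h
      have heI := hXsupp e h
      exact ⟨hsubI heI, hIint e heI⟩
    · intro v htv
      have hcases : dI v = 0 ∨ 2 ≤ dI v := by
        have := hdeg1 v htv
        omega
      rcases hcases with hd0 | hd2
      · exact hzero_sum X hXsupp v hd0
      · have hvT : v ∈ T := Finset.mem_filter.mpr ⟨Finset.mem_univ v, htv, hd2⟩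
        have e1 : (∑ e ∈ G.edgeFinset, if v ∈ e then X e else 0)
            = ∑ e ∈ I, if v ∈ e then X e else 0 := by
          refine (Finset.sum_subset hsubI fun e he hni => ?_).symm
          have hX0 : X e = 0 := dif_neg hni
          rw [hX0, ite_self]
        have e2 : (∑ e ∈ I, if v ∈ e then X e else 0)
            = ∑ e : ↥I, if (v : V) ∈ (e : Sym2 V) then x e else 0 := by
          rw [← Finset.sum_coe_sort I (fun e => if v ∈ e then X e else 0)]
          refine Finset.sum_congr rfl fun e _ => ?_
          have hXe : X (e : Sym2 V) = x e := dif_pos e.2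
          rw [hXe]
        rw [e1, e2]
        exact congrFun hΦx ⟨v, hvT⟩
  · -- structured case: X = f - 1/2 on interior edges
    have hTsum : ∑ v ∈ T, dI v = 2 * T.card := by omega
    have hdeg2 : ∀ v ∈ T, dI v = 2 := by
      by_contra h
      push_neg at h
      obtain ⟨v0, hv0, hne⟩ := h
      have h2 : 2 ≤ dI v0 := (Finset.mem_filter.mp hv0).2.2
      have hlt2 : ∀ v ∈ T, (fun _ : V => 2) v ≤ dI v :=
        fun v hv => (Finset.mem_filter.mp hv).2.2
      have := Finset.sum_lt_sum hlt2 ⟨v0, hv0, lt_of_le_of_ne h2 (Ne.symm hne)⟩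
      rw [Finset.sum_const, smul_eq_mul] at this
      omega
    have hdeg0 : ∀ v : V, v ∉ T → dI v = 0 := by
      have hss : ∑ v ∈ Finset.univ \ T, dI v + ∑ v ∈ T, dI v = 2 * I.card := by
        rw [Finset.sum_sdiff (Finset.subset_univ T)]
        exact hc0
      have hz : ∑ v ∈ Finset.univ \ T, dI v = 0 := by omega
      intro v hv
      exact (Finset.sum_eq_zero_iff.mp hz) v
        (Finset.mem_sdiff.mpr ⟨Finset.mem_univ v, hv⟩)
    set X : Sym2 V → ℝ := fun e => if e ∈ I then f e - 1/2 else 0 with hXdef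
    have hXsupp : ∀ e, X e ≠ 0 → e ∈ I := by
      intro e h
      by_contra hni
      exact h (if_neg hni)
    refine ⟨X, ⟨e₀, he₀, ?_⟩, ?_, ?_⟩
    · rw [hXdef]
      simp only [if_pos he₀I]
      intro hc
      exact hbh (by linarith)
    · intro e h
      have heI := hXsupp e h
      exact ⟨hsubI heI, hIint e heI⟩
    · intro v htv
      have hcases : dI v = 0 ∨ 2 ≤ dI v := by
        have := hdeg1 v htv
        omega
      rcases hcases with hd0 | hd2
      · exact hzero_sum X hXsupp v hd0
      · have hvT : v ∈ T := Finset.mem_filter.mpr ⟨Finset.mem_univ v, htv, hd2⟩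
        obtain ⟨e1, e2, hne12, hpair⟩ := Finset.card_eq_two.mp (hdeg2 v hvT)
        have he1 : e1 ∈ I.filter (fun e => v ∈ e) := by rw [hpair]; simp
        have he2 : e2 ∈ I.filter (fun e => v ∈ e) := by rw [hpair]; simp
        have he1I := (Finset.mem_filter.mp he1).1
        have he2I := (Finset.mem_filter.mp he2).1
        -- the sum over edges reduces to X e1 + X e2
        have hs1 : (∑ e ∈ G.edgeFinset, if v ∈ e then X e else 0)
            = ∑ e ∈ I, if v ∈ e then X e else 0 := by
          refine (Finset.sum_subset hsubI fun e he hni => ?_).symm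
          have hX0 : X e = 0 := if_neg hni
          rw [hX0, ite_self]
        have hs2 : (∑ e ∈ I, if v ∈ e then X e else 0)
            = ∑ e ∈ I.filter (fun e => v ∈ e), X e := (Finset.sum_filter _ _).symm
        have hs3 : (∑ e ∈ I.filter (fun e => v ∈ e), X e) = X e1 + X e2 := by
          rw [hpair, Finset.sum_pair hne12]
        -- tightness gives f e1 + f e2 = 1
        have hfs : f e1 + f e2 + m v = 1 := by
          have hs := hsplit v
          rw [htv, hpair, Finset.sum_pair hne12] at hs
          linarith
        have hm0 : m v = 0 := by
          rcases hm01 v with h | h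
          · exact h
          · have := (hIint e1 he1I).1
            have := (hIint e2 he2I).1
            linarith
        rw [hs1, hs2, hs3, hXdef]
        simp only [if_pos he1I, if_pos he2I]
        linarith

private lemma perturb_lemma [Fintype V] [DecidableEq V] (G : SimpleGraph V) [DecidableRel G.Adj]
    {f X : Sym2 V → ℝ} (hf : IsFracMatching G f)
    (hXsupp : ∀ e, X e ≠ 0 → e ∈ G.edgeFinset ∧ 0 < f e ∧ f e < 1)
    (hXtight : ∀ v : V, (∑ e ∈ G.edgeFinset, if v ∈ e then f e else 0) = 1 →
        (∑ e ∈ G.edgeFinset, if v ∈ e then X e else 0) = 0) :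
    ∃ ε : ℝ, 0 < ε ∧ ∀ η : ℝ, |η| ≤ ε → IsFracMatching G (fun e => f e + η * X e) := by
  classical
  obtain ⟨hbnd, hsupp, hle⟩ := hf
  by_cases hX0 : ∀ e, X e = 0
  · refine ⟨1, one_pos, fun η _ => ⟨?_, ?_, ?_⟩⟩
    · intro e; beta_reduce; rw [hX0 e]; simpa using hbnd e
    · intro e he; beta_reduce; rw [hX0 e, hsupp e he]; ring
    · intro v
      beta_reduce
      have : ∀ e ∈ G.edgeFinset, (if v ∈ e then f e + η * X e else 0)
          = (if v ∈ e then f e else 0) := by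
        intro e _; rw [hX0 e]; split <;> ring
      rw [Finset.sum_congr rfl this]
      exact hle v
  · push_neg at hX0
    obtain ⟨ew, hew⟩ := hX0
    have hne : (Finset.univ : Finset (Sym2 V)).Nonempty := ⟨ew, Finset.mem_univ _⟩
    have hV : Nonempty V := ⟨(Quot.out ew).1⟩
    have hnev : (Finset.univ : Finset V).Nonempty := Finset.univ_nonempty
    set εE : ℝ := Finset.univ.inf' hne
        (fun e : Sym2 V => if X e = 0 then 1 else min (f e) (1 - f e) / |X e|) with hεE
    set εV : ℝ := Finset.univ.inf' hnev
        (fun v : V => if (∑ e ∈ G.edgeFinset, if v ∈ e then X e else 0) = 0 then 1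
          else (1 - ∑ e ∈ G.edgeFinset, if v ∈ e then f e else 0)
            / |∑ e ∈ G.edgeFinset, if v ∈ e then X e else 0|) with hεV
    have hεEpos : 0 < εE := by
      rw [hεE, Finset.lt_inf'_iff]
      intro e _
      split
      · exact one_pos
      · next h =>
        obtain ⟨_, h1, h2⟩ := hXsupp e h
        exact div_pos (lt_min h1 (by linarith)) (abs_pos.mpr h)
    have hεVpos : 0 < εV := by
      rw [hεV, Finset.lt_inf'_iff]
      intro v _
      split
      · exact one_pos
      · next h =>
        have hlt : (∑ e ∈ G.edgeFinset, if v ∈ e then f e else 0) < 1 :=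
          lt_of_le_of_ne (hle v) (fun hc => h (hXtight v hc))
        exact div_pos (by linarith) (abs_pos.mpr h)
    refine ⟨min εE εV, lt_min hεEpos hεVpos, fun η hη => ⟨?_, ?_, ?_⟩⟩
    · -- edge bounds
      intro e
      beta_reduce
      by_cases hXe : X e = 0
      · rw [hXe]; simpa using hbnd e
      · obtain ⟨_, h1, h2⟩ := hXsupp e hXe
        have hkey : |η * X e| ≤ min (f e) (1 - f e) := by
          have h3 : εE ≤ min (f e) (1 - f e) / |X e| := by
            have := Finset.inf'_le (b := e)
              (fun e : Sym2 V => if X e = 0 then 1 else min (f e) (1 - f e) / |X e|)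
              (Finset.mem_univ e)
            rw [if_neg hXe] at this
            exact this
          have h4 : |η| ≤ min (f e) (1 - f e) / |X e| :=
            le_trans hη (le_trans (min_le_left _ _) h3)
          rw [abs_mul]
          calc |η| * |X e| ≤ (min (f e) (1 - f e) / |X e|) * |X e| :=
                mul_le_mul_of_nonneg_right h4 (abs_nonneg _)
            _ = min (f e) (1 - f e) := by
                field_simp
        rw [abs_le] at hkey
        constructor
        · have := hkey.1
          have := neg_le_of_neg_le (neg_le_neg hkey.2)
          have hm1 : min (f e) (1 - f e) ≤ f e := min_le_left _ _
          nlinarith [hkey.1, hm1]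
        · have hm2 : min (f e) (1 - f e) ≤ 1 - f e := min_le_right _ _
          nlinarith [hkey.2, hm2]
    · -- support
      intro e he
      beta_reduce
      have hXe : X e = 0 := by
        by_contra h
        exact he (SimpleGraph.mem_edgeFinset.mp (hXsupp e h).1)
      rw [hXe, hsupp e he]; ring
    · -- vertex constraints
      intro v
      beta_reduce
      have hsplit : (∑ e ∈ G.edgeFinset, if v ∈ e then f e + η * X e else 0)
          = (∑ e ∈ G.edgeFinset, if v ∈ e then f e else 0)
            + η * (∑ e ∈ G.edgeFinset, if v ∈ e then X e else 0) := by
        rw [Finset.mul_sum, ← Finset.sum_add_distrib]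
        exact Finset.sum_congr rfl fun e _ => by split <;> ring
      rw [hsplit]
      by_cases hSX : (∑ e ∈ G.edgeFinset, if v ∈ e then X e else 0) = 0
      · rw [hSX]; simpa using hle v
      · have hlt : (∑ e ∈ G.edgeFinset, if v ∈ e then f e else 0) < 1 :=
          lt_of_le_of_ne (hle v) (fun hc => hSX (hXtight v hc))
        have h3 : εV ≤ (1 - ∑ e ∈ G.edgeFinset, if v ∈ e then f e else 0)
            / |∑ e ∈ G.edgeFinset, if v ∈ e then X e else 0| := by
          have := Finset.inf'_le (b := v)
            (fun v : V => if (∑ e ∈ G.edgeFinset, if v ∈ e then X e else 0) = 0 then 1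
              else (1 - ∑ e ∈ G.edgeFinset, if v ∈ e then f e else 0)
                / |∑ e ∈ G.edgeFinset, if v ∈ e then X e else 0|) (Finset.mem_univ v)
          rw [if_neg hSX] at this
          exact this
        have h4 : |η| ≤ (1 - ∑ e ∈ G.edgeFinset, if v ∈ e then f e else 0)
            / |∑ e ∈ G.edgeFinset, if v ∈ e then X e else 0| :=
          le_trans hη (le_trans (min_le_right _ _) h3)
        have hkey : |η * (∑ e ∈ G.edgeFinset, if v ∈ e then X e else 0)|
            ≤ 1 - ∑ e ∈ G.edgeFinset, if v ∈ e then f e else 0 := by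
          rw [abs_mul]
          calc |η| * |∑ e ∈ G.edgeFinset, if v ∈ e then X e else 0|
              ≤ ((1 - ∑ e ∈ G.edgeFinset, if v ∈ e then f e else 0)
                / |∑ e ∈ G.edgeFinset, if v ∈ e then X e else 0|)
                * |∑ e ∈ G.edgeFinset, if v ∈ e then X e else 0| :=
                mul_le_mul_of_nonneg_right h4 (abs_nonneg _)
            _ = 1 - ∑ e ∈ G.edgeFinset, if v ∈ e then f e else 0 := by
                field_simp
        rw [abs_le] at hkey
        linarith [hkey.2]

/-- Every finite graph admits a maximum fractional matching with all values in
`{0, 1/2, 1}`. -/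
theorem stmt_7 [Fintype V] [DecidableEq V] (G : SimpleGraph V) [DecidableRel G.Adj] :
    ∃ f : Sym2 V → ℝ, IsFracMatching G f ∧
      (∑ e ∈ G.edgeFinset, f e) = fracMatchingNumber G ∧
      ∀ e ∈ G.edgeSet, f e = 0 ∨ f e = 1 / 2 ∨ f e = 1 := by
  classical
  set F : Set (Sym2 V → ℝ) := {f | IsFracMatching G f} with hFdef
  have hLcont : Continuous (fun f : Sym2 V → ℝ => ∑ e ∈ G.edgeFinset, f e) :=
    continuous_finset_sum _ fun e _ => continuous_apply e
  have hFne : F.Nonempty :=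
    ⟨fun _ => 0, ⟨fun e => by norm_num, fun e _ => rfl, fun v => by simp⟩⟩
  have hFsub : F ⊆ Set.univ.pi (fun _ : Sym2 V => Set.Icc (0:ℝ) 1) := by
    intro f hf e _
    exact ⟨(hf.1 e).1, (hf.1 e).2⟩
  have hFclosed : IsClosed F := by
    have h1 : IsClosed {f : Sym2 V → ℝ | ∀ e, 0 ≤ f e ∧ f e ≤ 1} := by
      rw [Set.setOf_forall]
      refine isClosed_iInter fun e => ?_
      rw [Set.setOf_and]
      exact (isClosed_le continuous_const (continuous_apply e)).inter
        (isClosed_le (continuous_apply e) continuous_const)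
    have h2 : IsClosed {f : Sym2 V → ℝ | ∀ e, e ∉ G.edgeSet → f e = 0} := by
      rw [Set.setOf_forall]
      refine isClosed_iInter fun e => ?_
      by_cases he : e ∈ G.edgeSet
      · have : {f : Sym2 V → ℝ | e ∉ G.edgeSet → f e = 0} = Set.univ := by
          ext f; simp [he]
        rw [this]; exact isClosed_univ
      · have : {f : Sym2 V → ℝ | e ∉ G.edgeSet → f e = 0} = {f | f e = 0} := by
          ext f; simp [he]
        rw [this]; exact isClosed_eq (continuous_apply e) continuous_const
    have h3 : IsClosed {f : Sym2 V → ℝ |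
        ∀ v : V, ∑ e ∈ G.edgeFinset, (if v ∈ e then f e else 0) ≤ 1} := by
      rw [Set.setOf_forall]
      refine isClosed_iInter fun v => ?_
      refine isClosed_le (continuous_finset_sum _ fun e _ => ?_) continuous_const
      by_cases h : v ∈ e
      · simpa [h] using continuous_apply e
      · simp only [if_neg h]
        exact continuous_const
    have hFeq : F = {f : Sym2 V → ℝ | ∀ e, 0 ≤ f e ∧ f e ≤ 1}
        ∩ ({f : Sym2 V → ℝ | ∀ e, e ∉ G.edgeSet → f e = 0}
          ∩ {f : Sym2 V → ℝ |
            ∀ v : V, ∑ e ∈ G.edgeFinset, (if v ∈ e then f e else 0) ≤ 1}) :=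
      Set.ext fun f => Iff.rfl
    rw [hFeq]
    exact h1.inter (h2.inter h3)
  have hFcompact : IsCompact F :=
    IsCompact.of_isClosed_subset (isCompact_univ_pi fun _ => isCompact_Icc) hFclosed hFsub
  obtain ⟨f₀, hf₀F, hf₀max⟩ := hFcompact.exists_isMaxOn hFne hLcont.continuousOn
  have hgreat : IsGreatest {x : ℝ | ∃ f, IsFracMatching G f ∧ ∑ e ∈ G.edgeFinset, f e = x}
      (∑ e ∈ G.edgeFinset, f₀ e) := by
    constructor
    · exact ⟨f₀, hf₀F, rfl⟩
    · rintro x ⟨g, hg, rfl⟩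
      exact hf₀max hg
  have hμ : fracMatchingNumber G = ∑ e ∈ G.edgeFinset, f₀ e := by
    rw [fracMatchingNumber]
    exact hgreat.csSup_eq
  set M : Set (Sym2 V → ℝ) :=
    F ∩ {f | (∑ e ∈ G.edgeFinset, f e) = ∑ e ∈ G.edgeFinset, f₀ e} with hMdef
  have hMcompact : IsCompact M :=
    hFcompact.inter_right (isClosed_eq hLcont continuous_const)
  have hMne : M.Nonempty := ⟨f₀, hf₀F, rfl⟩
  have hφcont : Continuous (fun f : Sym2 V → ℝ => ∑ e ∈ G.edgeFinset, (f e - 1/2)^2) :=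
    continuous_finset_sum _ fun e _ => ((continuous_apply e).sub continuous_const).pow 2
  obtain ⟨f, hfM, hfmax⟩ := hMcompact.exists_isMaxOn hMne hφcont.continuousOn
  have hfF : IsFracMatching G f := hfM.1
  refine ⟨f, hfF, by rw [hμ]; exact hfM.2, ?_⟩
  intro e he
  by_contra hbad
  obtain ⟨X, ⟨e₁, he₁, hXe₁⟩, hXsupp, hXtight⟩ :=
    kernel_lemma G hfF (SimpleGraph.mem_edgeFinset.mpr he) hbad
  obtain ⟨ε, hεpos, hpert⟩ := perturb_lemma G hfF hXsupp hXtight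
  have hplusF : (fun e => f e + ε * X e) ∈ F := hpert ε (by rw [abs_of_pos hεpos])
  have hminusF : (fun e => f e + (-ε) * X e) ∈ F :=
    hpert (-ε) (by rw [abs_neg, abs_of_pos hεpos])
  have hLp : (∑ e ∈ G.edgeFinset, (f e + ε * X e))
      = (∑ e ∈ G.edgeFinset, f e) + ε * ∑ e ∈ G.edgeFinset, X e := by
    rw [Finset.mul_sum, ← Finset.sum_add_distrib]
  have hLm : (∑ e ∈ G.edgeFinset, (f e + (-ε) * X e))
      = (∑ e ∈ G.edgeFinset, f e) + (-ε) * ∑ e ∈ G.edgeFinset, X e := by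
    rw [Finset.mul_sum, ← Finset.sum_add_distrib]
  have hub1 : (∑ e ∈ G.edgeFinset, (f e + ε * X e)) ≤ ∑ e ∈ G.edgeFinset, f₀ e :=
    hf₀max hplusF
  have hub2 : (∑ e ∈ G.edgeFinset, (f e + (-ε) * X e)) ≤ ∑ e ∈ G.edgeFinset, f₀ e :=
    hf₀max hminusF
  have hfeq : (∑ e ∈ G.edgeFinset, f e) = ∑ e ∈ G.edgeFinset, f₀ e := hfM.2
  have hSX : (∑ e ∈ G.edgeFinset, X e) = 0 := by
    rw [hLp, hfeq] at hub1
    rw [hLm, hfeq] at hub2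
    nlinarith
  have hplusM : (fun e => f e + ε * X e) ∈ M := by
    refine ⟨hplusF, ?_⟩
    show (∑ e ∈ G.edgeFinset, (f e + ε * X e)) = ∑ e ∈ G.edgeFinset, f₀ e
    rw [hLp, hSX, hfeq]; ring
  have hminusM : (fun e => f e + (-ε) * X e) ∈ M := by
    refine ⟨hminusF, ?_⟩
    show (∑ e ∈ G.edgeFinset, (f e + (-ε) * X e)) = ∑ e ∈ G.edgeFinset, f₀ e
    rw [hLm, hSX, hfeq]; ring
  have hφp : (∑ e ∈ G.edgeFinset, ((f e + ε * X e) - 1/2)^2)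
      ≤ ∑ e ∈ G.edgeFinset, (f e - 1/2)^2 := hfmax hplusM
  have hφm : (∑ e ∈ G.edgeFinset, ((f e + (-ε) * X e) - 1/2)^2)
      ≤ ∑ e ∈ G.edgeFinset, (f e - 1/2)^2 := hfmax hminusM
  have hsq : (∑ e ∈ G.edgeFinset, ((f e + ε * X e) - 1/2)^2)
      + (∑ e ∈ G.edgeFinset, ((f e + (-ε) * X e) - 1/2)^2)
      = 2 * (∑ e ∈ G.edgeFinset, (f e - 1/2)^2)
        + 2 * ε^2 * (∑ e ∈ G.edgeFinset, (X e)^2) := by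
    rw [← Finset.sum_add_distrib, Finset.mul_sum, Finset.mul_sum, ← Finset.sum_add_distrib]
    exact Finset.sum_congr rfl fun e _ => by ring
  have hXsq : 0 < ∑ e ∈ G.edgeFinset, (X e)^2 := by
    refine Finset.sum_pos' (fun e _ => sq_nonneg _) ⟨e₁, he₁, ?_⟩
    exact lt_of_le_of_ne (sq_nonneg _) (Ne.symm (pow_ne_zero 2 hXe₁))
  have hprod : 0 < ε^2 * ∑ e ∈ G.edgeFinset, (X e)^2 := mul_pos (pow_pos hεpos 2) hXsq
  linarith
end

section
/- Let G be a ⌈cn⌉-regular graph on n vertices, and let 0 < γ, ε < 1. If n is sufficiently large, there exists a set R ⊆ V(G) with (1-ε)γn ≤ |R| ≤ (1+ε)γn such that every vertex v of G satisfies (1-ε)cγn ≤ |N(v) ∩ R| ≤ (1+ε)cγn. -/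
/-!
Keep each vertex independently with probability `γ`. For a set `A` of vertices,
`#(A ∩ R) - γ #A` is a sum of `#A` independent centred variables bounded by `1`, so its fourth
moment is at most `3 #A²`, and Markov's inequality bounds the probability of a deviation of at
least `t` by `3 #A² / t⁴`. For `A = V` with `t = εγn` and for the `n` neighbourhoods with
`t = εγd/2`, where `d = ⌈cn⌉`, these failure probabilities add up to `O(1/n)`, which is below `1`
once `n` is large; the second moment would only give a total of `O(1)`.
-/

open MeasureTheory ProbabilityTheory Finset unitInterval

lemma Finset.abs_sum_le_card {ι : Type*} (s : Finset ι) {f : ι → ℝ} (h : ∀ i ∈ s, |f i| ≤ 1) :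
    |∑ i ∈ s, f i| ≤ #s :=
  (abs_sum_le_sum_abs _ _).trans <| by simpa using sum_le_sum h

namespace ProbabilityTheory

variable {Ω : Type*} [MeasurableSpace Ω] {μ : Measure Ω}

lemma measureReal_abs_ge_le_integral_pow_four_div {X : Ω → ℝ} (hX : Integrable (fun ω ↦ X ω ^ 4) μ)
    {t : ℝ} (ht : 0 < t) : μ.real {ω | t ≤ |X ω|} ≤ (∫ ω, X ω ^ 4 ∂μ) / t ^ 4 := by
  have hset : {ω | t ≤ |X ω|} = {ω | t ^ 4 ≤ X ω ^ 4} := by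
    ext ω
    show t ≤ |X ω| ↔ t ^ 4 ≤ X ω ^ 4
    rw [← pow_le_pow_iff_left₀ ht.le (abs_nonneg (X ω)) four_ne_zero, Even.pow_abs (by decide)]
  rw [hset, le_div_iff₀ (by positivity), mul_comm]
  exact mul_meas_ge_le_integral_of_nonneg (ae_of_all _ fun ω ↦ by positivity) hX _

lemma IndepFun.integral_add_pow {X Y : Ω → ℝ} (hXY : IndepFun X Y μ)
    (hX : ∀ k : ℕ, Integrable (fun ω ↦ X ω ^ k) μ) (hY : ∀ k : ℕ, Integrable (fun ω ↦ Y ω ^ k) μ)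
    (n : ℕ) :
    ∫ ω, (X ω + Y ω) ^ n ∂μ =
      ∑ k ∈ range (n + 1), (∫ ω, X ω ^ k ∂μ) * (∫ ω, Y ω ^ (n - k) ∂μ) * n.choose k := by
  have hpow (k j : ℕ) : IndepFun (fun ω ↦ X ω ^ k) (fun ω ↦ Y ω ^ j) μ :=
    hXY.comp (measurable_id.pow_const k) (measurable_id.pow_const j)
  have hint (k j : ℕ) : Integrable (fun ω ↦ X ω ^ k * Y ω ^ j) μ :=
    (hpow k j).integrable_mul (hX k) (hY j)
  simp_rw [add_pow]
  rw [integral_finsetSum _ fun k _ ↦ (hint k _).mul_const _]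
  refine sum_congr rfl fun k _ ↦ ?_
  rw [integral_mul_const, (hpow k _).integral_fun_mul_eq_mul_integral
    (hX k).aestronglyMeasurable (hY _).aestronglyMeasurable]

lemma integrable_pow_of_abs_le [IsFiniteMeasure μ] {X : Ω → ℝ} (hX : Measurable X) {C : ℝ}
    (hC : ∀ ω, |X ω| ≤ C) (k : ℕ) : Integrable (fun ω ↦ X ω ^ k) μ :=
  .of_bound (hX.pow_const k).aestronglyMeasurable (C ^ k) <| ae_of_all _ fun ω ↦ by
    rw [Real.norm_eq_abs, abs_pow]
    exact pow_le_pow_left₀ (abs_nonneg _) (hC ω) k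

variable [IsProbabilityMeasure μ]

lemma integral_pow_le_one_of_abs_le_one {X : Ω → ℝ} (hX : Measurable X) (h1 : ∀ ω, |X ω| ≤ 1)
    (k : ℕ) : ∫ ω, X ω ^ k ∂μ ≤ 1 := by
  simpa using integral_mono (integrable_pow_of_abs_le hX h1 k) (integrable_const (μ := μ) 1)
    fun ω ↦ (le_abs_self _).trans <| by simpa [abs_pow] using pow_le_one₀ (abs_nonneg _) (h1 ω)

lemma exists_forall_notMem_of_sum_measureReal_lt_one {κ : Type*} [Fintype κ] (s : κ → Set Ω)
    (h : ∑ k, μ.real (s k) < 1) : ∃ ω, ∀ k, ω ∉ s k := by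
  by_contra! hcov
  have hunion : ⋃ k, s k = Set.univ := Set.eq_univ_of_forall fun ω ↦ Set.mem_iUnion.2 (hcov ω)
  have := measureReal_iUnion_fintype_le (μ := μ) s
  rw [hunion, probReal_univ] at this
  linarith

variable {ι : Type*} {Y : ι → Ω → ℝ}

lemma iIndepFun.integral_sum_pow_le (hY : iIndepFun Y μ) (hm : ∀ i, Measurable (Y i))
    (h0 : ∀ i, ∫ ω, Y i ω ∂μ = 0) (h1 : ∀ i ω, |Y i ω| ≤ 1) (A : Finset ι) :
    ∫ ω, (∑ i ∈ A, Y i ω) ^ 2 ∂μ ≤ #A ∧ ∫ ω, (∑ i ∈ A, Y i ω) ^ 4 ∂μ ≤ 3 * #A ^ 2 := by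
  classical
  induction A using Finset.induction_on with
  | empty => simp
  | insert u A hu ih =>
    have hind : IndepFun (fun ω ↦ ∑ i ∈ A, Y i ω) (Y u) μ := by
      simpa [Finset.sum_fn] using hY.indepFun_finsetSum_of_notMem hm hu
    have hS := integrable_pow_of_abs_le (μ := μ) (Finset.measurable_sum A fun i _ ↦ hm i)
      fun ω ↦ A.abs_sum_le_card fun i _ ↦ h1 i ω
    have hU := integrable_pow_of_abs_le (μ := μ) (hm u) (h1 u)
    have hS1 : ∫ ω, ∑ i ∈ A, Y i ω ∂μ = 0 := by
      rw [integral_finsetSum _ fun i _ ↦ by simpa using integrable_pow_of_abs_le (hm i) (h1 i) 1]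
      simp [h0]
    have hS2 : 0 ≤ ∫ ω, (∑ i ∈ A, Y i ω) ^ 2 ∂μ := integral_nonneg fun ω ↦ sq_nonneg _
    have hU2 := integral_pow_le_one_of_abs_le_one (μ := μ) (hm u) (h1 u) 2
    have hU4 := integral_pow_le_one_of_abs_le_one (μ := μ) (hm u) (h1 u) 4
    simp only [sum_insert hu, card_insert_of_notMem hu, add_comm (Y u _)]
    rw [hind.integral_add_pow hS hU, hind.integral_add_pow hS hU]
    norm_num [sum_range_succ, Nat.choose, hS1, h0 u]
    have := mul_le_mul_of_nonneg_left hU2 hS2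
    constructor <;> nlinarith [ih.1, ih.2]

lemma iIndepFun.exists_forall_abs_sum_lt (hY : iIndepFun Y μ) (hm : ∀ i, Measurable (Y i))
    (h0 : ∀ i, ∫ ω, Y i ω ∂μ = 0) (h1 : ∀ i ω, |Y i ω| ≤ 1) {κ : Type*} [Fintype κ]
    (A : κ → Finset ι) {t : κ → ℝ} (ht : ∀ k, 0 < t k)
    (h : ∑ k, 3 * (#(A k) : ℝ) ^ 2 / t k ^ 4 < 1) :
    ∃ ω, ∀ k, |∑ i ∈ A k, Y i ω| < t k := by
  have hbad k : μ.real {ω | t k ≤ |∑ i ∈ A k, Y i ω|} ≤ 3 * (#(A k) : ℝ) ^ 2 / t k ^ 4 :=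
    calc _ ≤ (∫ ω, (∑ i ∈ A k, Y i ω) ^ 4 ∂μ) / t k ^ 4 :=
          measureReal_abs_ge_le_integral_pow_four_div (integrable_pow_of_abs_le
            (Finset.measurable_sum _ fun i _ ↦ hm i)
            (fun ω ↦ (A k).abs_sum_le_card fun i _ ↦ h1 i ω) 4) (ht k)
      _ ≤ _ := by gcongr; exact (hY.integral_sum_pow_le hm h0 h1 (A k)).2
  obtain ⟨ω, hω⟩ := exists_forall_notMem_of_sum_measureReal_lt_one _
    ((sum_le_sum fun k _ ↦ hbad k).trans_lt h)
  exact ⟨ω, fun k ↦ not_le.1 (hω k)⟩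

end ProbabilityTheory

theorem Finset.exists_forall_abs_card_inter_sub_lt {V κ : Type*} [Fintype V] [DecidableEq V]
    [Fintype κ] (A : κ → Finset V) {γ : ℝ} (hγ0 : 0 ≤ γ) (hγ1 : γ ≤ 1) {t : κ → ℝ}
    (ht : ∀ k, 0 < t k) (h : ∑ k, 3 * (#(A k) : ℝ) ^ 2 / t k ^ 4 < 1) :
    ∃ R : Finset V, ∀ k, |(#(A k ∩ R) : ℝ) - γ * #(A k)| < t k := by
  let p : I := ⟨γ, hγ0, hγ1⟩
  let f (b : Bool) : ℝ := (if b then 1 else 0) - γ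
  have hf : Measurable f := measurable_of_countable f
  have hmean : ∫ b, f b ∂Ber(true, false, p) = 0 := by
    rw [integral_bernoulliMeasure]
    simp [f, p]
    ring
  obtain ⟨ω, hω⟩ := iIndepFun.exists_forall_abs_sum_lt
    (μ := Measure.pi fun _ : V ↦ Ber(true, false, p)) (Y := fun v ω ↦ f (ω v))
    (iIndepFun_pi fun _ ↦ hf.aemeasurable) (fun v ↦ hf.comp (measurable_pi_apply v))
    (fun v ↦ (integral_comp_eval hf.aestronglyMeasurable).trans hmean)
    (fun v ω ↦ by unfold f; split_ifs <;> rw [abs_le] <;> constructor <;> linarith) A ht h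
  refine ⟨univ.filter (ω ·), fun k ↦ ?_⟩
  convert hω k using 2
  simp [f, sum_sub_distrib, sum_boole, inter_filter, mul_comm]

lemma deviation_bounds_sum_lt_one {c γ ε n d : ℝ} (hc0 : 0 < c) (hc1 : c ≤ 1) (hγ : 0 < γ)
    (hε : 0 < ε) (hn1 : 1 ≤ n) (hn : 52 / (ε ^ 4 * γ ^ 4 * c ^ 2) ≤ n) (hd : c * n ≤ d) :
    3 * n ^ 2 / (ε * γ * n) ^ 4 + n * (3 * d ^ 2 / (ε / 2 * γ * d) ^ 4) < 1 := by
  have hK : 0 < ε ^ 4 * γ ^ 4 * c ^ 2 := by positivity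
  have hKn : 52 ≤ ε ^ 4 * γ ^ 4 * c ^ 2 * n := by rwa [div_le_iff₀' hK] at hn
  have hcn : 0 < c * n := by positivity
  have hall : 3 * n ^ 2 / (ε * γ * n) ^ 4 = 3 / (ε ^ 4 * γ ^ 4 * n ^ 2) := by
    field_simp
  have hnbr : n * (3 * d ^ 2 / (ε / 2 * γ * d) ^ 4) = 48 * n / (ε ^ 4 * γ ^ 4 * d ^ 2) := by
    field_simp; ring
  have hall' : 3 / (ε ^ 4 * γ ^ 4 * n ^ 2) ≤ 3 / (ε ^ 4 * γ ^ 4 * c ^ 2 * n) := by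
    have : ε ^ 4 * γ ^ 4 * (c ^ 2 * n) ≤ ε ^ 4 * γ ^ 4 * n ^ 2 := by gcongr; nlinarith
    exact div_le_div_of_nonneg_left (by norm_num) (by positivity) (by linarith)
  have hnbr' : 48 * n / (ε ^ 4 * γ ^ 4 * d ^ 2) ≤ 48 / (ε ^ 4 * γ ^ 4 * c ^ 2 * n) :=
    calc 48 * n / (ε ^ 4 * γ ^ 4 * d ^ 2) ≤ 48 * n / (ε ^ 4 * γ ^ 4 * (c * n) ^ 2) := by gcongr
      _ = 48 / (ε ^ 4 * γ ^ 4 * c ^ 2 * n) := by field_simp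
  have hsum : 3 / (ε ^ 4 * γ ^ 4 * c ^ 2 * n) + 48 / (ε ^ 4 * γ ^ 4 * c ^ 2 * n) < 1 := by
    rw [← add_div, div_lt_one (by positivity)]
    linarith
  linarith

lemma bounds_of_abs_sub_lt_half_mul {x d m ε γ : ℝ} (hγ : 0 ≤ γ) (hε1 : ε ≤ 1)
    (hm : 3 ≤ ε * m) (hmd : m ≤ d) (hdm : d ≤ m + 1) (hx : |x - γ * d| < ε / 2 * γ * d) :
    (1 - ε) * γ * m ≤ x ∧ x ≤ (1 + ε) * γ * m := by
  rw [abs_lt] at hx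
  have h1 := mul_le_mul_of_nonneg_left hmd hγ
  have h2 := mul_le_mul_of_nonneg_left hdm hγ
  have h3 := mul_le_mul_of_nonneg_left hm hγ
  constructor <;> nlinarith

/-- Reservoir lemma: in a `⌈cn⌉`-regular graph on `n` vertices with `n` large, there
is a set `R` of size `(1±ε)γn` such that every vertex has `(1±ε)cγn` neighbors in `R`. -/
theorem stmt_10 (c γ ε : ℝ) (hc0 : 0 < c) (hc1 : c ≤ 1) (hγ0 : 0 < γ) (hγ1 : γ < 1)
    (hε0 : 0 < ε) (hε1 : ε < 1) :
    ∃ n₀ : ℕ, ∀ n : ℕ, n₀ ≤ n →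
      ∀ (V : Type) [Fintype V] [DecidableEq V] (G : SimpleGraph V) [DecidableRel G.Adj],
        Fintype.card V = n → G.IsRegularOfDegree ⌈c * n⌉₊ →
        ∃ R : Finset V,
          ((1 - ε) * γ * n ≤ (R.card : ℝ) ∧ (R.card : ℝ) ≤ (1 + ε) * γ * n) ∧
          ∀ v : V, (1 - ε) * c * γ * n ≤ ((G.neighborFinset v ∩ R).card : ℝ) ∧
            ((G.neighborFinset v ∩ R).card : ℝ) ≤ (1 + ε) * c * γ * n := by
  refine ⟨⌈52 / (ε ^ 4 * γ ^ 4 * c ^ 2) + 3 / (ε * c)⌉₊, fun n hn V _ _ G _ hcard hreg ↦ ?_⟩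
  have hn' := Nat.ceil_le.1 hn
  have h52 : 52 / (ε ^ 4 * γ ^ 4 * c ^ 2) ≤ n := by linarith [show 0 ≤ 3 / (ε * c) by positivity]
  have h3 : 3 ≤ ε * (c * n) := by
    rw [← mul_assoc, ← div_le_iff₀' (by positivity)]
    linarith [show 0 ≤ 52 / (ε ^ 4 * γ ^ 4 * c ^ 2) by positivity]
  have hn1 : (1 : ℝ) ≤ n := Nat.one_le_cast.2 <| Nat.cast_pos.1 <|
    (show (0 : ℝ) < 52 / (ε ^ 4 * γ ^ 4 * c ^ 2) by positivity).trans_le h52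
  set d := ⌈c * n⌉₊
  have hd : c * n ≤ d := Nat.le_ceil _
  have hd' : (d : ℝ) ≤ c * n + 1 := (Nat.ceil_lt_add_one (by positivity)).le
  obtain ⟨R, hR⟩ := exists_forall_abs_card_inter_sub_lt
    (fun o : Option V ↦ o.elim univ fun v ↦ G.neighborFinset v) hγ0.le hγ1.le
    (t := fun o ↦ o.elim (ε * γ * n) fun _ ↦ ε / 2 * γ * d)
    (by rintro (_ | _) <;> simp only [Option.elim] <;> positivity)
    (by simpa [hcard, hreg.degree_eq] using deviation_bounds_sum_lt_one hc0 hc1 hγ0 hε0 hn1 h52 hd)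
  refine ⟨R, ?_, fun v ↦ ?_⟩
  · have := abs_lt.1 (hR none)
    simp only [Option.elim, univ_inter, card_univ, hcard] at this
    constructor <;> linarith
  · have := hR (some v)
    simp only [Option.elim, G.card_neighborFinset_eq_degree, hreg.degree_eq] at this
    have := bounds_of_abs_sub_lt_half_mul hγ0.le hε1.le h3 hd hd' this
    constructor <;> linarith
end
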